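/- arXiv:2502.08360 — 2 statements merged into one kernel-verified Lean document; each statement's English description precedes it below -/
import Mathlib

section
/- For Q ∈ ℕ⁺ and 1 ≤ q ≤ Q, the function ρ ↦ (ρ^(q/(Q+1)) - 1)/(ρ - 1) is strictly decreasing on (1, ∞). -/
/-- These are the secant slopes of the strictly concave `ρ ↦ ρ ^ p` through `(1, 1)`. -/
theorem Real.strictAntiOn_rpow_sub_one_div_sub_one {p : ℝ} (hp₀ : 0 < p) (hp₁ : p < 1) :
    StrictAntiOn (fun ρ : ℝ => (ρ ^ p - 1) / (ρ - 1)) (Set.Ici 0 \ {1}) := by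
  rintro x ⟨hx₀, hx₁⟩ y ⟨hy₀, hy₁⟩ hxy
  simpa only [Real.one_rpow] using
    (Real.strictConcaveOn_rpow hp₀ hp₁).secant_strict_mono (a := 1)
      (Set.mem_Ici.2 zero_le_one) hx₀ hy₀ hx₁ hy₁ hxy

theorem threshold_strictAnti_general (Q : ℕ) (q : ℕ) (hq1 : 1 ≤ q) (hqQ : q ≤ Q) :
    StrictAntiOn (fun ρ : ℝ => (ρ ^ ((q : ℝ) / (Q + 1)) - 1) / (ρ - 1)) (Set.Ioi 1) := by
  have hq_pos : (0 : ℝ) < q := by exact_mod_cast hq1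
  have hq_lt : (q : ℝ) < Q + 1 := by exact_mod_cast Nat.lt_succ_of_le hqQ
  refine (Real.strictAntiOn_rpow_sub_one_div_sub_one (by positivity)
    ((div_lt_one (by positivity)).2 hq_lt)).mono ?_
  rintro ρ (hρ : 1 < ρ)
  exact ⟨zero_le_one.trans hρ.le, hρ.ne'⟩

theorem threshold_strictAnti (Q : ℕ) (hQ : 0 < Q) (q : ℕ) (hq1 : 1 ≤ q) (hqQ : q ≤ Q) :
    StrictAntiOn (fun ρ : ℝ => (ρ ^ ((q : ℝ) / (Q + 1)) - 1) / (ρ - 1)) (Set.Ioi 1) :=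
  threshold_strictAnti_general Q q hq1 hqQ
end

section
/- For 1 < ρ₁ < ρ₂, the companders satisfy h_{ρ₂}(z) ≥ h_{ρ₁}(z) for all z ∈ [0,1], where h_ρ(z) = log_ρ((ρ-1)z + 1). -/
/-!
Write `h_ρ(z) = log_ρ((ρ - 1) z + 1)`; for `z ∈ [0, 1]` the exponent `u = h_{ρ₁}(z)` lies in
`[0, 1]` and `z = (ρ₁ ^ u - 1) / (ρ₁ - 1)`. That quotient is the slope of the secant of the
concave function `t ↦ t ^ u` from `1` to `ρ₁`, so it only decreases when `ρ₁` is replaced by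
`ρ₂ ≥ ρ₁`. Hence `ρ₂ ^ u ≤ (ρ₂ - 1) z + 1`, i.e. `u ≤ h_{ρ₂}(z)`.
-/

open Real Set

theorem rpow_sub_one_div_sub_one_le_of_le {p x y : ℝ} (hp₀ : 0 ≤ p) (hp₁ : p ≤ 1) (hx : 0 ≤ x)
    (hx₁ : x ≠ 1) (hy₁ : y ≠ 1) (hxy : x ≤ y) :
    (y ^ p - 1) / (y - 1) ≤ (x ^ p - 1) / (x - 1) := by
  have h := (concaveOn_rpow hp₀ hp₁).neg.secant_mono (a := 1) (mem_Ici.2 zero_le_one)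
    (mem_Ici.2 hx) (mem_Ici.2 (hx.trans hxy)) hx₁ hy₁ hxy
  simp only [Pi.neg_apply, one_rpow] at h
  have neg_secant (t : ℝ) : (-t ^ p - -1) / (t - 1) = -((t ^ p - 1) / (t - 1)) := by ring
  rwa [neg_secant, neg_secant, neg_le_neg_iff] at h

noncomputable def compander (ρ z : ℝ) : ℝ :=
  logb ρ ((ρ - 1) * z + 1)

section compander

variable {ρ z : ℝ}

theorem compander_mem_Icc (hρ : 1 < ρ) (hz : z ∈ Icc 0 1) : compander ρ z ∈ Icc 0 1 := by
  obtain ⟨hz₀, hz₁⟩ := hz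
  have hpos : 0 ≤ (ρ - 1) * z := mul_nonneg (by linarith) hz₀
  refine ⟨logb_nonneg hρ (by linarith), ?_⟩
  calc compander ρ z ≤ logb ρ ρ :=
        logb_le_logb_of_le hρ (by linarith) (by nlinarith)
    _ = 1 := logb_self_eq_one hρ

theorem rpow_compander (hρ : 1 < ρ) (hz : 0 ≤ z) : ρ ^ compander ρ z = (ρ - 1) * z + 1 :=
  rpow_logb (by linarith) hρ.ne' (by nlinarith)

theorem compander_le_compander {ρ₁ ρ₂ : ℝ} (h₁ : 1 < ρ₁) (h₁₂ : ρ₁ ≤ ρ₂) (hz : z ∈ Icc 0 1) :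
    compander ρ₁ z ≤ compander ρ₂ z := by
  have h₂ : 1 < ρ₂ := h₁.trans_le h₁₂
  obtain ⟨hu₀, hu₁⟩ := compander_mem_Icc h₁ hz
  set u := compander ρ₁ z
  have hz_eq : (ρ₁ ^ u - 1) / (ρ₁ - 1) = z := by
    rw [rpow_compander h₁ hz.1]
    field_simp [(sub_pos.2 h₁).ne']
    ring
  have hsecant := rpow_sub_one_div_sub_one_le_of_le hu₀ hu₁ (by linarith) h₁.ne' h₂.ne' h₁₂
  rw [hz_eq, div_le_iff₀ (sub_pos.2 h₂)] at hsecant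
  rw [compander, le_logb_iff_rpow_le h₂ (by nlinarith [hz.1])]
  linarith

end compander

theorem compander_monotone_in_rho (ρ₁ ρ₂ : ℝ) (h₁ : 1 < ρ₁) (h₁₂ : ρ₁ < ρ₂) :
    ∀ z ∈ Set.Icc (0:ℝ) 1,
      Real.log ((ρ₁ - 1) * z + 1) / Real.log ρ₁ ≤
        Real.log ((ρ₂ - 1) * z + 1) / Real.log ρ₂ := by
  intro z hz
  simp only [log_div_log]
  exact compander_le_compander h₁ h₁₂.le hz
end
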